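/- arXiv:2404.05226 — 5 statements merged into one kernel-verified Lean document; each statement's English description precedes it below -/
import Mathlib

section
/- For any r ∈ ℕ, any two distinct natural numbers a, b, and any 2-coloring φ: ℕ → {1,2}, there exist sets B, C ⊆ ℕ with |B| = r and |C| infinite, and a color i ∈ {1,2}, such that φ(x) = i for all x ∈ B + aC and all x ∈ B + bC (where B + aC = {β + a·γ : β ∈ B, γ ∈ C}). -/
/-!
Write `b = a + d` and call `x < N` an agreement for `γ` if `c (x + a γ) = c (x + b γ)`.
If infinitely many `γ` have `2 r` agreements, some `r` of them of one colour recur for infinitely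
many `γ`, since there are finitely many candidates. Otherwise (for `a > 0`) eventually every `γ`
has few agreements, so `c (w - d γ)` differs from both `c w` and `c (w + d u)` for most `w`:
far out, `c` is nearly `d u`-periodic for every small `u`. Counting disagreeing pairs then makes
`c` nearly constant along the multiples of `d` in each block, overlapping blocks share that
colour, and so the pairs `(d s + a d k, d s + b d k)` mostly agree, a contradiction.
The case `a = 0` follows from the case `(d, 2 d)` by translating `B`.
-/

open Finset

theorem Bool.eq_or_eq_of_ne {x y z : Bool} (h : y ≠ z) : x = y ∨ x = z := by
  revert x y z; decide

namespace MonochromaticSumsets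

theorem card_filter_mul_card_filter_not_le (f : ℕ → Bool) (M K : ℕ)
    (h : ∀ u ∈ Ico 1 M, #{s ∈ range M | f s ≠ f (s + u)} ≤ K) :
    #{s ∈ range M | f s} * #{s ∈ range M | ¬ f s} ≤ K * M := by
  rw [← card_product]
  calc _ ≤ #((Ico 1 M).sigma fun u => {s ∈ range M | f s ≠ f (s + u)}) := by
        refine card_le_card_of_injOn (fun p => ⟨max p.1 p.2 - min p.1 p.2, min p.1 p.2⟩) ?_ ?_
        · rintro ⟨s, s'⟩ hp
          simp only [mem_coe, mem_product, mem_filter, mem_range] at hp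
          obtain ⟨⟨hs, hfs⟩, hs', hfs'⟩ := hp
          have hne : s ≠ s' := by rintro rfl; simp_all
          simp only [mem_coe, mem_sigma, mem_Ico, mem_filter, mem_range]
          refine ⟨by omega, by omega, ?_⟩
          rcases le_total s s' with h | h
          · simp [min_eq_left h, max_eq_right h, Nat.add_sub_cancel' h, hfs, hfs']
          · simp [min_eq_right h, max_eq_left h, Nat.add_sub_cancel' h, hfs, hfs']
        · rintro ⟨s, s'⟩ hp ⟨t, t'⟩ hq heq
          simp only [mem_coe, mem_product, mem_filter, mem_range] at hp hq
          simp only [Sigma.mk.injEq, heq_eq_eq] at heq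
          have : (s = t ∧ s' = t') ∨ (s = t' ∧ s' = t) := by omega
          rcases this with ⟨rfl, rfl⟩ | ⟨rfl, rfl⟩
          · rfl
          · simp_all
    _ = ∑ u ∈ Ico 1 M, #{s ∈ range M | f s ≠ f (s + u)} := card_sigma _ _
    _ ≤ ∑ u ∈ Ico 1 M, K := sum_le_sum h
    _ ≤ K * M := by
        rw [sum_const, Nat.card_Ico, smul_eq_mul, mul_comm]
        exact Nat.mul_le_mul_left K (Nat.sub_le M 1)

theorem exists_card_filter_ne_le (f : ℕ → Bool) (M K : ℕ)
    (h : ∀ u ∈ Ico 1 M, #{s ∈ range M | f s ≠ f (s + u)} ≤ K) :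
    ∃ e, #{s ∈ range M | f s ≠ e} ≤ 2 * K := by
  have hprod := card_filter_mul_card_filter_not_le f M K h
  have hsum := card_filter_add_card_filter_not (s := range M) (fun s => f s = true)
  rw [card_range] at hsum
  by_contra! hbig
  have h1 := hbig true
  have h2 := hbig false
  simp only [ne_eq, Bool.not_eq_true, Bool.not_eq_false] at h1 h2 hsum hprod
  nlinarith

theorem exists_forall_card_filter_ne_le (g : ℕ → Bool) {M E S₀ : ℕ} (hM : 2 * E + 1 < M)
    (h : ∀ s₀ ≥ S₀, ∃ e, #{s ∈ range M | g (s₀ + s) ≠ e} ≤ E) :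
    ∃ e, ∀ s₀ ≥ S₀, #{s ∈ range M | g (s₀ + s) ≠ e} ≤ E := by
  obtain ⟨e, he⟩ := h S₀ le_rfl
  refine ⟨e, fun s₀ hs₀ => ?_⟩
  induction s₀, hs₀ using Nat.le_induction with
  | base => exact he
  | succ s₀ hs₀ ih =>
    obtain ⟨e', he'⟩ := h (s₀ + 1) (by omega)
    obtain rfl | hne := eq_or_ne e' e
    · exact he'
    -- blocks `s₀` and `s₀ + 1` overlap in `M - 1` places, each off one of the two colours
    have hcover : range (M - 1) ⊆ {s ∈ range M | g (s₀ + 1 + s) ≠ e'} ∪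
        {s ∈ range (M - 1) | g (s₀ + (s + 1)) ≠ e} := by
      intro s hs
      simp only [mem_range] at hs
      simp only [mem_union, mem_filter, mem_range, ← add_assoc, add_right_comm s₀ s 1]
      revert hne
      cases g (s₀ + 1 + s) <;> cases e <;> cases e' <;> simp <;> omega
    have hshift : #{s ∈ range (M - 1) | g (s₀ + (s + 1)) ≠ e} ≤ E := by
      refine (card_le_card_of_injOn (· + 1) ?_ (add_left_injective 1).injOn).trans ih
      intro s hs
      simp only [mem_coe, mem_filter, mem_range] at hs ⊢
      exact ⟨by omega, hs.2⟩
    have := (card_le_card hcover).trans (card_union_le _ _)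
    rw [card_range] at this
    omega

def agreements (c : ℕ → Bool) (a b N γ : ℕ) : Finset ℕ :=
  {x ∈ range N | c (x + a * γ) = c (x + b * γ)}

theorem card_filter_ne_shift_le (c : ℕ → Bool) {a d N K Γ M T s₀ u : ℕ} (hd : 0 < d)
    (hagr : ∀ γ ≥ Γ, #(agreements c a (a + d) N γ) ≤ K)
    (hN : a * T + (a + d) + d * M ≤ N) (hs₀ : (a + d) * Γ + a * T ≤ d * s₀) (hu : u ≤ T) :
    #{s ∈ range M | c (d * (s₀ + s)) ≠ c (d * (s₀ + (s + u)))} ≤ 2 * K := by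
  set b := a + d
  obtain ⟨γ, hγ, hγlo, hγhi⟩ : ∃ γ ≥ Γ, b * γ + a * T ≤ d * s₀ ∧ d * s₀ < b * γ + a * T + b := by
    refine ⟨(d * s₀ - a * T) / b, (Nat.le_div_iff_mul_le (by omega)).2 (by rw [mul_comm]; omega),
      ?_, ?_⟩
    · have := Nat.mul_div_le (d * s₀ - a * T) b
      omega
    · have := Nat.lt_mul_div_succ (d * s₀ - a * T) (show 0 < b by omega)
      rw [mul_add, mul_one] at this
      omega
  have hau : a * u ≤ a * T := Nat.mul_le_mul_left a hu
  have hds : ∀ s, d * (s₀ + s) = d * s₀ + d * s := fun s => mul_add d s₀ s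
  have hcard : ∀ γ' ≥ Γ, ∀ k ≤ a * u,
      #{s ∈ range M | d * (s₀ + s) - b * γ - k ∈ agreements c a b N γ'} ≤ K := by
    intro γ' hγ' k hk
    refine (card_le_card_of_injOn _ (fun s hs => (mem_filter.1 hs).2) ?_).trans (hagr γ' hγ')
    intro s _ s' _ h
    have : d * s = d * s' := by simp only [hds] at h; omega
    exact Nat.eq_of_mul_eq_mul_left hd this
  -- for `w = d (s₀ + s)`, two of `w - d γ, w, w + d u` share a colour; the first two form the pair
  -- at `w - b γ` for `γ`, the first and last the pair at `w - b γ - a u` for `γ + u`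
  have hbad : {s ∈ range M | c (d * (s₀ + s)) ≠ c (d * (s₀ + (s + u)))} ⊆
      {s ∈ range M | d * (s₀ + s) - b * γ ∈ agreements c a b N γ} ∪
      {s ∈ range M | d * (s₀ + s) - b * γ - a * u ∈ agreements c a b N (γ + u)} := by
    intro s hs
    simp only [mem_filter, mem_range] at hs
    have hsM : d * s < d * M := Nat.mul_lt_mul_of_pos_left hs.1 hd
    have e0 := hds s
    have e1 : d * (s₀ + (s + u)) = d * s₀ + d * s + d * u := by ring
    have e2 : b * γ = a * γ + d * γ := by ring
    have e3 : b * (γ + u) = b * γ + a * u + d * u := by ring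
    have e4 : a * (γ + u) = a * γ + a * u := by ring
    have h1 : d * (s₀ + s) - b * γ + b * γ = d * (s₀ + s) := by omega
    have h2 : d * (s₀ + s) - b * γ - a * u + b * (γ + u) = d * (s₀ + (s + u)) := by omega
    have h3 : d * (s₀ + s) - b * γ - a * u + a * (γ + u) = d * (s₀ + s) - b * γ + a * γ := by
      omega
    simp only [agreements, mem_union, mem_filter, mem_range, h1, h2, h3]
    rcases Bool.eq_or_eq_of_ne (x := c (d * (s₀ + s) - b * γ + a * γ)) hs.2 with h | h
    · left; exact ⟨hs.1, by omega, h⟩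
    · right; exact ⟨hs.1, by omega, h⟩
  calc _ ≤ _ := card_le_card hbad
    _ ≤ K + K := (card_union_le _ _).trans
        (add_le_add (by simpa using hcard γ hγ 0 (Nat.zero_le _))
          (hcard (γ + u) (by omega) _ le_rfl))
    _ = 2 * K := (two_mul K).symm

theorem infinite_setOf_lt_card_agreements (c : ℕ → Bool) {a d : ℕ} (ha : 0 < a) (hd : 0 < d)
    (K : ℕ) : {γ | K < #(agreements c a (a + d) ((a + d) * (9 * K + 3)) γ)}.Infinite := by
  -- blocks of length `M` must outnumber the `4 K + 4 K + K` exceptions met below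
  set M := 9 * K + 2
  set N := (a + d) * (9 * K + 3)
  have hN : a * M + (a + d) + d * M ≤ N := le_of_eq (by ring)
  by_contra hfin
  obtain ⟨Γ, hΓ⟩ := (Set.not_infinite.1 hfin).bddAbove
  have hagr : ∀ γ ≥ Γ + 1, #(agreements c a (a + d) N γ) ≤ K :=
    fun γ hγ => not_lt.1 fun h => by have := hΓ h; omega
  set S₀ := (a + d) * (Γ + 1) + a * M
  have hblock : ∀ s₀ ≥ S₀, ∃ e, #{s ∈ range M | c (d * (s₀ + s)) ≠ e} ≤ 2 * (2 * K) := by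
    intro s₀ hs₀
    refine exists_card_filter_ne_le (fun s => c (d * (s₀ + s))) M (2 * K) fun u hu => ?_
    exact card_filter_ne_shift_le c hd hagr hN (le_trans hs₀ (Nat.le_mul_of_pos_left s₀ hd))
      (mem_Ico.1 hu).2.le
  obtain ⟨e, he⟩ := exists_forall_card_filter_ne_le (fun s => c (d * s)) (by omega) hblock
  set k := S₀ + Γ + 1
  have hgood : #{s ∈ range M | d * s ∈ agreements c a (a + d) N (d * k)} ≤ K := by
    refine (card_le_card_of_injOn (d * ·) (fun s hs => (mem_filter.1 hs).2) ?_).trans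
      (hagr _ (le_trans (by omega) (Nat.le_mul_of_pos_left k hd)))
    exact (mul_right_injective₀ hd.ne').injOn
  have hcover : range M ⊆ {s ∈ range M | c (d * (a * k + s)) ≠ e} ∪
      {s ∈ range M | c (d * ((a + d) * k + s)) ≠ e} ∪
      {s ∈ range M | d * s ∈ agreements c a (a + d) N (d * k)} := by
    intro s hs
    have hsN : d * s < N := by
      have := Nat.mul_lt_mul_of_pos_left (mem_range.1 hs) hd
      omega
    have e1 : d * s + a * (d * k) = d * (a * k + s) := by ring
    have e2 : d * s + (a + d) * (d * k) = d * ((a + d) * k + s) := by ring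
    simp only [agreements, mem_union, mem_filter, mem_range, e1, e2]
    revert hs hsN
    cases c (d * (a * k + s)) <;> cases c (d * ((a + d) * k + s)) <;> cases e <;> simp_all
  have h1 := he (a * k) (le_trans (by omega) (Nat.le_mul_of_pos_left k ha))
  have h2 := he ((a + d) * k) (le_trans (by omega) (Nat.le_mul_of_pos_left k (by omega)))
  have := (card_le_card hcover).trans ((card_union_le _ _).trans
    (add_le_add (card_union_le _ _) le_rfl))
  rw [card_range] at this
  omega

theorem exists_infinite_of_infinite_le_card_agreements (c : ℕ → Bool) {a b N r : ℕ}
    (h : {γ | 2 * r ≤ #(agreements c a b N γ)}.Infinite) :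
    ∃ B : Finset ℕ, ∃ e, #B = r ∧
      {γ | ∀ β ∈ B, c (β + a * γ) = e ∧ c (β + b * γ) = e}.Infinite := by
  by_contra! hfin
  refine h (Set.Finite.subset ((((range N).powersetCard r ×ˢ univ).finite_toSet).biUnion
    fun p hp => hfin p.1 p.2 (mem_powersetCard.1 (mem_product.1 hp).1).2) ?_)
  intro γ hγ
  obtain ⟨e, -, he⟩ := exists_le_card_fiber_of_mul_le_card_of_maps_to
    (f := fun x => c (x + a * γ)) (fun _ _ => mem_univ _) univ_nonempty
    (by rwa [card_univ, Fintype.card_bool])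
  obtain ⟨B, hBsub, hB⟩ := exists_subset_card_eq he
  simp only [Set.mem_iUnion]
  refine ⟨(B, e), mem_product.2 ⟨mem_powersetCard.2 ⟨fun x hx => ?_, hB⟩, mem_univ e⟩, ?_⟩
  · exact (mem_filter.1 (mem_filter.1 (hBsub hx)).1).1
  · intro β hβ
    obtain ⟨hβagr, hβe⟩ := mem_filter.1 (hBsub hβ)
    exact ⟨hβe, (mem_filter.1 hβagr).2 ▸ hβe⟩

theorem exists_infinite_monochromatic_of_pos (c : ℕ → Bool) {a d : ℕ} (ha : 0 < a) (hd : 0 < d)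
    (r : ℕ) : ∃ B : Finset ℕ, ∃ e, #B = r ∧
      {γ | ∀ β ∈ B, c (β + a * γ) = e ∧ c (β + (a + d) * γ) = e}.Infinite := by
  refine exists_infinite_of_infinite_le_card_agreements c (N := (a + d) * (9 * (2 * r) + 3))
    ((infinite_setOf_lt_card_agreements c ha hd (2 * r)).mono fun γ hγ => ?_)
  exact le_of_lt (show 2 * r < _ from hγ)

theorem exists_infinite_monochromatic_of_zero (c : ℕ → Bool) {d : ℕ} (hd : 0 < d) (r : ℕ) :
    ∃ B : Finset ℕ, ∃ e, #B = r ∧ {γ | ∀ β ∈ B, c β = e ∧ c (β + d * γ) = e}.Infinite := by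
  obtain ⟨B, e, hB, hinf⟩ := exists_infinite_monochromatic_of_pos c hd hd r
  obtain ⟨γ₀, hγ₀⟩ := hinf.nonempty
  refine ⟨B.image (· + d * γ₀), e, by rwa [card_image_of_injective _ (add_left_injective _)], ?_⟩
  have hinj : Set.InjOn (fun γ => 2 * γ - γ₀) (Set.Ici γ₀) :=
    fun γ (hγ : γ₀ ≤ γ) γ' (hγ' : γ₀ ≤ γ') (h : 2 * γ - γ₀ = 2 * γ' - γ₀) => by omega
  refine ((hinf.sdiff (Set.finite_Iio γ₀)).image
    (hinj.mono fun γ hγ => by simpa using hγ.2)).mono ?_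
  rintro _ ⟨γ, ⟨hγ, hγle⟩, rfl⟩ _ hβ
  obtain ⟨β, hβB, rfl⟩ := mem_image.1 hβ
  obtain ⟨δ, rfl⟩ := Nat.exists_eq_add_of_le (le_of_not_gt hγle)
  refine ⟨(hγ₀ β hβB).1, ?_⟩
  convert (hγ β hβB).2 using 2
  simp only [show 2 * (γ₀ + δ) - γ₀ = γ₀ + 2 * δ by omega]
  ring

theorem exists_infinite_monochromatic (c : ℕ → Bool) (r : ℕ) {a b : ℕ} (hab : a ≠ b) :
    ∃ B : Finset ℕ, ∃ e, #B = r ∧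
      {γ | ∀ β ∈ B, c (β + a * γ) = e ∧ c (β + b * γ) = e}.Infinite := by
  wlog hlt : a < b generalizing a b
  · obtain ⟨B, e, hB, hinf⟩ := this hab.symm (by omega)
    exact ⟨B, e, hB, by simpa only [and_comm] using hinf⟩
  obtain ⟨d, rfl⟩ : ∃ d, b = a + d := ⟨b - a, by omega⟩
  rcases Nat.eq_zero_or_pos a with rfl | ha
  · simpa using exists_infinite_monochromatic_of_zero c (d := d) (by omega) r
  · exact exists_infinite_monochromatic_of_pos c ha (by omega) r

end MonochromaticSumsets

/-- For any `r ∈ ℕ`, distinct naturals `a b`, and any 2-coloring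
`φ : ℕ → {1,2}`, there are `B C ⊆ ℕ` with `|B| = r`, `C` infinite, and a color
`i ∈ {1,2}` such that `φ` equals `i` on `B + aC` and on `B + bC`. -/
theorem monochromatic_two_sumsets (r a b : ℕ) (hab : a ≠ b)
    (φ : ℕ → ℕ) (hφ : ∀ n, φ n = 1 ∨ φ n = 2) :
    ∃ (B C : Set ℕ) (i : ℕ), B.ncard = r ∧ C.Infinite ∧ (i = 1 ∨ i = 2) ∧
      (∀ β ∈ B, ∀ γ ∈ C, φ (β + a * γ) = i) ∧
      (∀ β ∈ B, ∀ γ ∈ C, φ (β + b * γ) = i) := by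
  obtain ⟨B, e, hB, hC⟩ := MonochromaticSumsets.exists_infinite_monochromatic (fun n =>
    decide (φ n = 1)) r hab
  have hcol : ∀ n, decide (φ n = 1) = e → φ n = if e then 1 else 2 := by
    intro n h
    rcases hφ n with hn | hn <;> cases e <;> simp_all
  refine ⟨B, _, if e then 1 else 2, by rwa [Set.ncard_coe_finset], hC, by cases e <;> simp,
    fun β hβ γ hγ => hcol _ (hγ β hβ).1, fun β hβ γ hγ => hcol _ (hγ β hβ).2⟩
end

section
/- Let A = ⋃_{n≥1} {n² + n, n² + n + 1, ..., n² + 2n} ⊆ ℕ. Then for any sets B, C ⊆ ℕ with C infinite, the set B + C² = {β + γ² : β ∈ B, γ ∈ C} is not a subset of A. -/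
/-- With `A = ⋃_{n ≥ 1} [n² + n, n² + 2n]`, for any nonempty `B ⊆ ℕ`
and infinite `C ⊆ ℕ`, the set `B + C² = {β + γ² : β ∈ B, γ ∈ C}` is not contained
in `A`. -/
theorem sumset_squares_not_in_A
    (A : Set ℕ) (hA : A = {x : ℕ | ∃ n : ℕ, 1 ≤ n ∧ n ^ 2 + n ≤ x ∧ x ≤ n ^ 2 + 2 * n})
    (B C : Set ℕ) (hB : B.Nonempty) (hC : C.Infinite) :
    ¬ ({x : ℕ | ∃ β ∈ B, ∃ γ ∈ C, x = β + γ ^ 2} ⊆ A) := by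
  intro hsub
  obtain ⟨β, hβ⟩ := hB
  obtain ⟨γ, hγC, hγ⟩ := hC.exists_gt β
  have hx : β + γ ^ 2 ∈ A := hsub ⟨β, hβ, γ, hγC, rfl⟩
  rw [hA] at hx
  obtain ⟨n, hn1, hlo, hhi⟩ := hx
  rcases lt_trichotomy n γ with h | h | h
  · nlinarith
  · subst h; omega
  · nlinarith
end

section
/- Let P, Q ∈ ℤ[n] be distinct polynomials with positive leading coefficients and zero constant terms, with max(deg P, deg Q) > 1. Then there exists a 2-coloring φ: ℕ → {1,2} such that for every i ∈ {1,2} and every n ∈ ℕ, the set {m ∈ ℕ : φ(n + P(m)) = φ(n + Q(m)) = i} is finite (possibly empty). -/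
/-!
After swapping `P` and `Q` we may assume that `P - Q` has positive leading coefficient; then
`deg P ≥ 2`, so the gaps `P(m + 1) - P(m)` tend to infinity, and eventually `0 ≤ Q(m) < P(m)`.
Choose `ψ n` such that for all `m ≥ ψ n` these hold with gaps larger than `n`. Then the numbers
`n + P(m)` with `m ≥ ψ n` are pairwise distinct, so joining each of them to the smaller number
`n + Q(m)` gives a graph on `ℕ` in which every vertex has at most one smaller neighbour. This
forest is 2-coloured by alternating along descending paths, and then `n + P(m)` and `n + Q(m)`
get different colours for all `m ≥ ψ n`.
-/

open Polynomial Filter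

namespace Polynomial

theorem natDegree_le_of_leadingCoeff_sub_pos {R : Type*} [Ring R] [PartialOrder R]
    [IsOrderedAddMonoid R] {P Q : R[X]} (hQ : 0 < Q.leadingCoeff)
    (hPQ : 0 < (P - Q).leadingCoeff) : Q.natDegree ≤ P.natDegree := by
  refine natDegree_le_natDegree (not_lt.1 fun hlt => ?_)
  rw [leadingCoeff_sub_of_degree_lt' hlt] at hPQ
  exact (neg_pos.1 hPQ).not_gt hQ

theorem eventually_pos_eval (P : ℝ[X]) (hP : 0 < P.leadingCoeff) :
    ∀ᶠ x in atTop, 0 < P.eval x := by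
  by_cases hdeg : P.degree ≤ 0
  · rw [eq_C_of_degree_le_zero hdeg]
    rw [leadingCoeff, natDegree_eq_zero_iff_degree_le_zero.2 hdeg] at hP
    exact Eventually.of_forall fun _ => by simpa using hP
  · exact (P.tendsto_atTop_of_leadingCoeff_nonneg (not_le.1 hdeg) hP.le).eventually_gt_atTop 0

theorem tendsto_eval_add_one_sub_eval (P : ℝ[X]) (hP : 0 < P.leadingCoeff)
    (hdeg : 2 ≤ P.natDegree) : Tendsto (fun x => P.eval (x + 1) - P.eval x) atTop atTop := by
  have hderiv : Tendsto (fun x => P.derivative.eval x) atTop atTop :=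
    P.derivative.tendsto_atTop_of_leadingCoeff_nonneg
      (natDegree_pos_iff_degree_pos.1 (by rw [natDegree_derivative]; omega))
      (by rw [leadingCoeff_derivative]; positivity)
  rw [tendsto_atTop] at hderiv ⊢
  intro b
  obtain ⟨x₀, hx₀⟩ := (hderiv b).exists_forall_of_atTop
  filter_upwards [eventually_ge_atTop x₀] with x hx
  obtain ⟨c, hc, hslope⟩ := exists_deriv_eq_slope (fun x => P.eval x) (lt_add_one x)
    P.continuousOn P.differentiableOn
  rw [Polynomial.deriv, add_sub_cancel_left, div_one] at hslope
  exact hslope ▸ hx₀ c (hx.trans hc.1.le)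

theorem leadingCoeff_map_intCast_pos {P : ℤ[X]} (hP : 0 < P.leadingCoeff) :
    0 < (P.map (Int.castRingHom ℝ)).leadingCoeff := by
  simpa [leadingCoeff_map_of_injective (f := Int.castRingHom ℝ) Int.cast_injective] using hP

theorem eventually_pos_eval_natCast (P : ℤ[X]) (hP : 0 < P.leadingCoeff) :
    ∀ᶠ m : ℕ in atTop, 0 < P.eval (m : ℤ) := by
  have hPℝ := eventually_pos_eval _ (leadingCoeff_map_intCast_pos hP)
  filter_upwards [tendsto_natCast_atTop_atTop.eventually hPℝ] with m hm
  simpa [eval_natCast_map] using hm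

theorem eventually_eval_add_lt_eval_succ (P : ℤ[X]) (hP : 0 < P.leadingCoeff)
    (hdeg : 2 ≤ P.natDegree) (b : ℤ) :
    ∀ᶠ m : ℕ in atTop, P.eval (m : ℤ) + b < P.eval ((m + 1 : ℕ) : ℤ) := by
  have hdegℝ : 2 ≤ (P.map (Int.castRingHom ℝ)).natDegree := by
    rwa [natDegree_map_eq_of_injective (f := Int.castRingHom ℝ) Int.cast_injective]
  have hPℝ := (tendsto_eval_add_one_sub_eval _ (leadingCoeff_map_intCast_pos hP)
    hdegℝ).eventually_gt_atTop (b : ℝ)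
  filter_upwards [tendsto_natCast_atTop_atTop.eventually hPℝ] with m hm
  rw [← Nat.cast_add_one, eval_natCast_map, eval_natCast_map] at hm
  simp only [eq_intCast] at hm
  have : b < P.eval ((m + 1 : ℕ) : ℤ) - P.eval (m : ℤ) := by exact_mod_cast hm
  linarith

end Polynomial

open Classical in
noncomputable def alternatingColoring (R : ℕ → ℕ → Prop) (hR : ∀ x y, R x y → y < x) (x : ℕ) :
    Bool :=
  if h : ∃ y, R x y then !alternatingColoring R hR h.choose else false
termination_by x
decreasing_by exact hR _ _ h.choose_spec

theorem alternatingColoring_ne {R : ℕ → ℕ → Prop} (hR : ∀ x y, R x y → y < x)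
    (hfun : ∀ x y y', R x y → R x y' → y = y') {x y : ℕ} (hxy : R x y) :
    alternatingColoring R hR x ≠ alternatingColoring R hR y := by
  have hex : ∃ y, R x y := ⟨y, hxy⟩
  rw [alternatingColoring, dif_pos hex, hfun _ _ _ hex.choose_spec hxy]
  exact Bool.not_ne_self _

theorem add_lt_of_forall_add_lt_succ {s : ℕ → ℤ} {n : ℤ} {m m' : ℕ} (hn : 0 ≤ n)
    (hgap : ∀ k ≥ m, s k + n < s (k + 1)) (hmm' : m < m') : s m + n < s m' := by
  induction m', hmm' using Nat.le_induction with
  | base => exact hgap m le_rfl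
  | succ k hk ih => linarith [hgap k (by omega)]

theorem exists_coloring_eventually_ne (s t : ℕ → ℤ) (ht : ∀ᶠ m in atTop, 0 ≤ t m)
    (hts : ∀ᶠ m in atTop, t m < s m) (hgap : ∀ n : ℕ, ∀ᶠ m in atTop, s m + n < s (m + 1)) :
    ∃ c : ℕ → Bool, ∀ n : ℕ, ∀ᶠ m in atTop, c (n + s m).toNat ≠ c (n + t m).toNat := by
  choose ψ hψ using fun n : ℕ => eventually_atTop.1 (ht.and (hts.and (hgap n)))
  let R : ℕ → ℕ → Prop := fun x y =>
    ∃ n m : ℕ, ψ n ≤ m ∧ (x : ℤ) = n + s m ∧ (y : ℤ) = n + t m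
  have hR : ∀ x y, R x y → y < x := by
    rintro x y ⟨n, m, hm, hx, hy⟩
    have := (hψ n m hm).2.1
    omega
  have hinj : ∀ n n' m m' : ℕ, ψ n ≤ m → ψ n' ≤ m' → m < m' → (n : ℤ) + s m < n' + s m' := by
    intro n n' m m' hm _ hmm'
    linarith [add_lt_of_forall_add_lt_succ (Int.natCast_nonneg n)
      (fun k hk => (hψ n k (hm.trans hk)).2.2) hmm']
  have hfun : ∀ x y y', R x y → R x y' → y = y' := by
    rintro x y y' ⟨n, m, hm, hx, hy⟩ ⟨n', m', hm', hx', hy'⟩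
    obtain rfl : m = m' := by
      by_contra hne
      rcases Nat.lt_or_gt_of_ne hne with h | h
      · exact (hinj n n' m m' hm hm' h).ne (hx.symm.trans hx')
      · exact (hinj n' n m' m hm' hm h).ne (hx'.symm.trans hx)
    omega
  refine ⟨alternatingColoring R hR, fun n => ?_⟩
  filter_upwards [eventually_ge_atTop (ψ n)] with m hm
  obtain ⟨ht_nonneg, hts_lt, -⟩ := hψ n m hm
  refine alternatingColoring_ne hR hfun ⟨n, m, hm, ?_, ?_⟩ <;> omega

theorem two_coloring_nonlinear_counterexample_general (P Q : Polynomial ℤ)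
    (hPQ : P ≠ Q) (hP : 0 < P.leadingCoeff) (hQ : 0 < Q.leadingCoeff)
    (hdeg : 1 < max P.natDegree Q.natDegree) :
    ∃ φ : ℕ → ℕ, (∀ n, φ n = 1 ∨ φ n = 2) ∧
      ∀ i : ℕ, (i = 1 ∨ i = 2) → ∀ n : ℕ,
        {m : ℕ | φ (((n : ℤ) + P.eval (m : ℤ)).toNat) = i ∧
                 φ (((n : ℤ) + Q.eval (m : ℤ)).toNat) = i}.Finite := by
  wlog hPQ_lc : 0 < (P - Q).leadingCoeff generalizing P Q
  · have hQP_lc : 0 < (Q - P).leadingCoeff := by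
      rw [← neg_sub, leadingCoeff_neg, neg_pos]
      exact (not_lt.1 hPQ_lc).lt_of_ne (leadingCoeff_ne_zero.2 (sub_ne_zero.2 hPQ))
    obtain ⟨φ, hφ, hfin⟩ := this Q P hPQ.symm hQ hP (max_comm P.natDegree _ ▸ hdeg) hQP_lc
    exact ⟨φ, hφ, fun i hi n => by simpa only [and_comm] using hfin i hi n⟩
  have hdegP : 2 ≤ P.natDegree := by
    have := natDegree_le_of_leadingCoeff_sub_pos hQ hPQ_lc
    omega
  obtain ⟨c, hc⟩ :=
    exists_coloring_eventually_ne (fun m => P.eval (m : ℤ)) (fun m => Q.eval (m : ℤ))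
      ((eventually_pos_eval_natCast Q hQ).mono fun _ => le_of_lt)
      ((eventually_pos_eval_natCast _ hPQ_lc).mono fun _ h => by rwa [eval_sub, sub_pos] at h)
      (fun n => eventually_eval_add_lt_eval_succ P hP hdegP n)
  have hinj : Function.Injective fun b : Bool => if b then 2 else 1 := by decide
  refine ⟨fun x => if c x then 2 else 1, fun x => by cases c x <;> simp, fun i _ n => ?_⟩
  refine (Nat.cofinite_eq_atTop ▸ hc n : ∀ᶠ m in cofinite, _).subset fun m ⟨h₁, h₂⟩ => ?_
  exact fun hne => hne (hinj (h₁.trans h₂.symm))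

/-- For distinct `P, Q ∈ ℤ[n]` with positive leading coefficients,
zero constant terms, and `max(deg P, deg Q) > 1`, there is a 2-coloring
`φ : ℕ → {1,2}` such that for each color `i` and each `n ∈ ℕ` the set
`{m : φ(n + P(m)) = φ(n + Q(m)) = i}` is finite. -/
theorem two_coloring_nonlinear_counterexample (P Q : Polynomial ℤ)
    (hPQ : P ≠ Q) (hP : 0 < P.leadingCoeff) (hQ : 0 < Q.leadingCoeff)
    (hP0 : P.coeff 0 = 0) (hQ0 : Q.coeff 0 = 0)
    (hdeg : 1 < max P.natDegree Q.natDegree) :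
    ∃ φ : ℕ → ℕ, (∀ n, φ n = 1 ∨ φ n = 2) ∧
      ∀ i : ℕ, (i = 1 ∨ i = 2) → ∀ n : ℕ,
        {m : ℕ | φ (((n : ℤ) + P.eval (m : ℤ)).toNat) = i ∧
                 φ (((n : ℤ) + Q.eval (m : ℤ)).toNat) = i}.Finite :=
  two_coloring_nonlinear_counterexample_general P Q hPQ hP hQ hdeg
end

section
/- Let a < b be natural numbers, and let φ: ℕ → {1,2} be the 2-coloring defined by: φ(z) = 1 if z ∈ [(b/a)^{2m}, (b/a)^{2m+1}) for some m ∈ ℕ, φ(z) = 2 if z ∈ [(b/a)^{2m+1}, (b/a)^{2m+2}) for some m ∈ ℕ, and φ(z) = 1 otherwise. Then there do not exist infinite sets B, C ⊆ ℕ and i ∈ {1,2} with φ constantly equal to i on (B + aC) ∪ (B + bC). -/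
set_option maxHeartbeats 800000

lemma exists_pow_index (r : ℝ) (hr : 1 < r) (z : ℝ) (hz : r ^ 2 ≤ z) :
    ∃ k : ℕ, 2 ≤ k ∧ r ^ k ≤ z ∧ z < r ^ (k + 1) := by
  have hex : ∃ n : ℕ, z < r ^ n := pow_unbounded_of_one_lt z hr
  classical
  set N := Nat.find hex with hNdef
  have hN : z < r ^ N := Nat.find_spec hex
  have hN3 : 3 ≤ N := by
    by_contra h
    push_neg at h
    have : r ^ N ≤ r ^ 2 := pow_le_pow_right₀ hr.le (by omega)
    linarith
  refine ⟨N - 1, by omega, ?_, ?_⟩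
  · have := Nat.find_min hex (show N - 1 < N by omega)
    linarith [not_lt.mp this]
  · have : N - 1 + 1 = N := by omega
    rw [this]; exact hN

/-- with the 2-coloring by the real intervals `[(b/a)^j, (b/a)^{j+1})`
(odd powers colored `2`, even powers colored `1`, everything else colored `1`),
there are no infinite `B, C ⊆ ℕ` and color `i` with `φ` constantly `i` on
`(B + aC) ∪ (B + bC)`. -/
theorem geometric_coloring_no_infinite_BC (a b : ℕ) (ha : 0 < a) (hab : a < b)
    (φ : ℕ → ℕ)
    (h1 : ∀ z : ℕ, (∃ m : ℕ, 1 ≤ m ∧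
        ((b : ℝ) / a) ^ (2 * m) ≤ (z : ℝ) ∧ (z : ℝ) < ((b : ℝ) / a) ^ (2 * m + 1)) → φ z = 1)
    (h2 : ∀ z : ℕ, (∃ m : ℕ, 1 ≤ m ∧
        ((b : ℝ) / a) ^ (2 * m + 1) ≤ (z : ℝ) ∧ (z : ℝ) < ((b : ℝ) / a) ^ (2 * m + 2)) → φ z = 2)
    (h3 : ∀ z : ℕ,
        (¬ ∃ m : ℕ, 1 ≤ m ∧
          ((b : ℝ) / a) ^ (2 * m) ≤ (z : ℝ) ∧ (z : ℝ) < ((b : ℝ) / a) ^ (2 * m + 1)) →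
        (¬ ∃ m : ℕ, 1 ≤ m ∧
          ((b : ℝ) / a) ^ (2 * m + 1) ≤ (z : ℝ) ∧ (z : ℝ) < ((b : ℝ) / a) ^ (2 * m + 2)) →
        φ z = 1) :
    ¬ ∃ (B C : Set ℕ) (i : ℕ), B.Infinite ∧ C.Infinite ∧ (i = 1 ∨ i = 2) ∧
        (∀ β ∈ B, ∀ γ ∈ C, φ (β + a * γ) = i ∧ φ (β + b * γ) = i) := by
  rintro ⟨B, C, i, hB, hC, hi, hmono⟩
  set r : ℝ := (b : ℝ) / a with hrdef
  have ha' : (0 : ℝ) < a := by exact_mod_cast ha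
  have hb' : (0 : ℝ) < b := by exact_mod_cast (by omega : 0 < b)
  have hr : 1 < r := by
    rw [hrdef, lt_div_iff₀ ha']
    simpa using (by exact_mod_cast hab : (a : ℝ) < b)
  have hrpos : (0 : ℝ) < r := lt_trans zero_lt_one hr
  have hrb : r ≤ (b : ℝ) := by
    rw [hrdef]
    exact div_le_self hb'.le (by exact_mod_cast ha)
  have hrag : ∀ γ : ℕ, r * ((a : ℝ) * γ) = (b : ℝ) * γ := by
    intro γ
    rw [hrdef]; field_simp
  -- color lemma
  have hcolor : ∀ z k : ℕ, 2 ≤ k → r ^ k ≤ (z : ℝ) → (z : ℝ) < r ^ (k + 1) →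
      φ z = if k % 2 = 0 then 1 else 2 := by
    intro z k hk hkl hkr
    rcases Nat.even_or_odd k with ⟨m, hm⟩ | ⟨m, hm⟩
    · have hm' : 2 * m = k := by omega
      have : φ z = 1 := h1 z ⟨m, by omega, by rw [hm']; exact hkl, by rw [hm']; exact hkr⟩
      rw [this]; simp [show k % 2 = 0 by omega]
    · have hm' : 2 * m + 1 = k := by omega
      have : φ z = 2 := h2 z ⟨m, by omega, by rw [hm']; exact hkl,
        by rw [show 2 * m + 2 = k + 1 by omega]; exact hkr⟩
      rw [this]; simp [show k % 2 ≠ 0 by omega]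
  have hab' : (a : ℝ) ≤ b := by exact_mod_cast hab.le
  -- key lemma
  have key : ∀ β ∈ B, 1 ≤ β → ∀ γ ∈ C, b ^ 2 ≤ γ → ∃ k : ℕ,
      ((a : ℝ) * γ < r ^ k) ∧ (r ^ k ≤ (a : ℝ) * γ + β) ∧
      (r ^ (k + 1) - (r - 1) * β ≤ (β : ℝ) + b * γ) ∧ ((β : ℝ) + b * γ < r ^ (k + 1)) := by
    intro β hβ hβ1 γ hγ hγb
    obtain ⟨hzc, hwc⟩ := hmono β hβ γ hγ
    have hβ1' : (1 : ℝ) ≤ (β : ℝ) := by exact_mod_cast hβ1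
    have hγb' : (b : ℝ) ^ 2 ≤ (γ : ℝ) := by exact_mod_cast hγb
    have hγ1 : (1 : ℝ) ≤ (γ : ℝ) := le_trans (by nlinarith) hγb'
    have ha1 : (1 : ℝ) ≤ (a : ℝ) := by exact_mod_cast ha
    have hγa : (γ : ℝ) ≤ (a : ℝ) * γ := by
      nlinarith
    have hz2 : r ^ 2 ≤ ((β + a * γ : ℕ) : ℝ) := by
      push_cast
      have h1' : r ^ 2 ≤ (b : ℝ) ^ 2 := pow_le_pow_left₀ (by positivity) hrb 2
      linarith
    have hagbg : (a : ℝ) * γ ≤ (b : ℝ) * γ := by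
      apply mul_le_mul_of_nonneg_right hab' (by positivity)
    have hw2 : r ^ 2 ≤ ((β + b * γ : ℕ) : ℝ) := by
      push_cast
      push_cast at hz2
      linarith
    obtain ⟨k, hk2, hkl, hkr⟩ := exists_pow_index r hr _ hz2
    obtain ⟨l, hl2, hll, hlr⟩ := exists_pow_index r hr _ hw2
    push_cast at hkl hkr hll hlr
    have hwid : (β : ℝ) + b * γ = β + r * ((a : ℝ) * γ) := by rw [hrag]
    have hzw : (β : ℝ) + a * γ ≤ (β : ℝ) + b * γ := by linarith
    have hwlt : (β : ℝ) + b * γ < r * ((β : ℝ) + a * γ) := by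
      have hx : r * ((β : ℝ) + a * γ) = r * β + r * ((a : ℝ) * γ) := by ring
      have hβr : (β : ℝ) < r * β := by nlinarith
      rw [hwid, hx]; linarith
    have hlk : l = k ∨ l = k + 1 := by
      rcases lt_trichotomy l k with h | h | h
      · exfalso
        have : r ^ (l + 1) ≤ r ^ k := pow_le_pow_right₀ hr.le (by omega)
        linarith
      · exact Or.inl h
      · rcases Nat.lt_or_ge l (k + 2) with h' | h'
        · exact Or.inr (by omega)
        · exfalso
          have h2' : r ^ (k + 2) ≤ r ^ l := pow_le_pow_right₀ hr.le h'
          have h3' : r * ((β : ℝ) + a * γ) < r * r ^ (k + 1) :=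
            mul_lt_mul_of_pos_left hkr hrpos
          have h4' : r * r ^ (k + 1) = r ^ (k + 2) := by ring
          linarith
    have ez := hcolor (β + a * γ) k hk2 (by push_cast; exact hkl) (by push_cast; exact hkr)
    have ew := hcolor (β + b * γ) l hl2 (by push_cast; exact hll) (by push_cast; exact hlr)
    rw [hzc] at ez; rw [hwc] at ew
    have hlk' : l = k := by
      rcases hlk with h | h
      · exact h
      · exfalso
        subst h
        split_ifs at ez ew <;> omega
    subst hlk'
    have hp : r ^ (l + 1) = r * r ^ l := by ring
    refine ⟨l, ?_, ?_, ?_, hlr⟩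
    · -- a*γ < r^l
      have h5 : r * ((a : ℝ) * γ) < r * r ^ l := by
        rw [hwid] at hlr
        linarith
      exact lt_of_mul_lt_mul_left h5 hrpos.le
    · linarith
    · rw [hwid]
      have h6 : r ^ l - β ≤ (a : ℝ) * γ := by linarith
      have h7 : r * (r ^ l - β) ≤ r * ((a : ℝ) * γ) :=
        mul_le_mul_of_nonneg_left h6 hrpos.le
      have h8 : r * (r ^ l - (β : ℝ)) = r ^ (l + 1) - r * β := by ring
      linarith
  -- assemble
  obtain ⟨β, hβB, hβpos⟩ := hB.exists_gt 0
  obtain ⟨β', hβ'B, hβ'⟩ := hB.exists_gt (b * β)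
  obtain ⟨γ, hγC, hγgt⟩ := hC.exists_gt (b ^ 2 + β')
  have hb1 : 1 ≤ b := by omega
  have hβ'1 : 1 ≤ β' := by nlinarith
  obtain ⟨k, hk1, hk2, hk3, hk4⟩ := key β hβB hβpos γ hγC (by omega)
  obtain ⟨k', hk'1, hk'2, hk'3, hk'4⟩ := key β' hβ'B hβ'1 γ hγC (by omega)
  have hγβ' : (β' : ℝ) < γ := by exact_mod_cast (by omega : β' < γ)
  have hββ'n : β < β' := by nlinarith
  have hβγn : β < γ := by omega
  have hγβ : (β : ℝ) < γ := by exact_mod_cast hβγn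
  have hrg := hrag γ
  have hγpos : (0 : ℝ) < γ := by
    have : 0 < γ := by omega
    exact_mod_cast this
  have hba1 : (a : ℝ) + 1 ≤ b := by exact_mod_cast (by omega : a + 1 ≤ b)
  have hbγ : ((a : ℝ) + 1) * γ ≤ (b : ℝ) * γ :=
    mul_le_mul_of_nonneg_right hba1 hγpos.le
  have hkk : k = k' := by
    by_contra h
    rcases Nat.lt_or_ge k k' with hlt | hge
    · have h1' : r ^ (k + 1) ≤ r ^ k' := pow_le_pow_right₀ hr.le (by omega)
      have h2' : r ^ (k + 1) = r * r ^ k := by ring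
      have h3' : r * ((a : ℝ) * γ) < r * r ^ k := mul_lt_mul_of_pos_left hk1 hrpos
      -- r^k' ≥ r*r^k > r*aγ = bγ ≥ aγ + γ > aγ + β' ≥ r^k'
      have h4' : (a : ℝ) * γ + β' < (b : ℝ) * γ := by
        have : (a : ℝ) * γ + γ ≤ (b : ℝ) * γ := by linarith [hbγ]
        linarith
      linarith
    · have hlt : k' < k := by omega
      have h1' : r ^ (k' + 1) ≤ r ^ k := pow_le_pow_right₀ hr.le (by omega)
      have h2' : r ^ (k' + 1) = r * r ^ k' := by ring
      have h3' : r * ((a : ℝ) * γ) < r * r ^ k' := mul_lt_mul_of_pos_left hk'1 hrpos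
      have hββ' : (β : ℝ) < β' := by exact_mod_cast hββ'n
      have h4' : (a : ℝ) * γ + β < (b : ℝ) * γ := by
        have : (a : ℝ) * γ + γ ≤ (b : ℝ) * γ := by linarith [hbγ]
        linarith
      linarith
  subst hkk
  have hbβ : (b : ℝ) * β < β' := by exact_mod_cast hβ'
  have hβpos' : (0 : ℝ) < β := by exact_mod_cast hβpos
  have hrbβ : r * β ≤ (b : ℝ) * β := mul_le_mul_of_nonneg_right hrb hβpos'.le
  -- hk'4 : β' + bγ < r^(k+1), hk3 : r^(k+1) - (r-1)β ≤ β + bγ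
  linarith
end

section
/- Let a < b < c be natural numbers, let y = max(c/b, b/a), choose x ∈ (y, c/a) and l ∈ (x·y, x·c/a). Define φ: ℕ → {1,2} by φ(z) = 1 if z ∈ [l^m, x·l^m) for some m ∈ ℕ, φ(z) = 2 if z ∈ [x·l^m, l^{m+1}) for some m ∈ ℕ, and φ(z) = 1 otherwise. Then for every n ∈ ℕ and i ∈ {1,2}, the set {m ∈ ℕ : φ(n + am) = φ(n + bm) = φ(n + cm) = i} is finite. -/
set_option maxHeartbeats 1000000 in
/-- for `a < b < c`, `y = max(c/b, b/a)`, `x ∈ (y, c/a)` and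
`l ∈ (xy, x·c/a)`, the 2-coloring by the real intervals `[l^m, x·l^m)` (color `1`)
and `[x·l^m, l^{m+1})` (color `2`) makes every set
`{m : φ(n + am) = φ(n + bm) = φ(n + cm) = i}` finite. -/
theorem three_term_geometric_coloring_finite (a b c : ℕ) (ha : 0 < a)
    (hab : a < b) (hbc : b < c) (y x l : ℝ)
    (hy : y = max ((c : ℝ) / b) ((b : ℝ) / a))
    (hyx : y < x) (hxc : x < (c : ℝ) / a)
    (hxl : x * y < l) (hlc : l < x * ((c : ℝ) / a))
    (φ : ℕ → ℕ)
    (h1 : ∀ z : ℕ, (∃ m : ℕ, 1 ≤ m ∧ l ^ m ≤ (z : ℝ) ∧ (z : ℝ) < x * l ^ m) → φ z = 1)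
    (h2 : ∀ z : ℕ, (∃ m : ℕ, 1 ≤ m ∧ x * l ^ m ≤ (z : ℝ) ∧ (z : ℝ) < l ^ (m + 1)) → φ z = 2)
    (h3 : ∀ z : ℕ,
        (¬ ∃ m : ℕ, 1 ≤ m ∧ l ^ m ≤ (z : ℝ) ∧ (z : ℝ) < x * l ^ m) →
        (¬ ∃ m : ℕ, 1 ≤ m ∧ x * l ^ m ≤ (z : ℝ) ∧ (z : ℝ) < l ^ (m + 1)) →
        φ z = 1) :
    ∀ (n : ℕ) (i : ℕ), (i = 1 ∨ i = 2) →
      {m : ℕ | φ (n + a * m) = i ∧ φ (n + b * m) = i ∧ φ (n + c * m) = i}.Finite := by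
  intro n i hi
  have ha1 : (1:ℝ) ≤ (a:ℝ) := by exact_mod_cast ha
  have hab' : (a:ℝ) < (b:ℝ) := by exact_mod_cast hab
  have hbc' : (b:ℝ) < (c:ℝ) := by exact_mod_cast hbc
  have ha0 : (0:ℝ) < (a:ℝ) := by linarith
  have hb0 : (0:ℝ) < (b:ℝ) := by linarith
  have hy1 : 1 < y := by
    rw [hy]
    exact lt_max_of_lt_right ((one_lt_div ha0).mpr hab')
  have hx1 : 1 < x := hy1.trans hyx
  have hy0 : (0:ℝ) < y := by linarith
  have hx0 : (0:ℝ) < x := by linarith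
  have hl1 : 1 < l := by nlinarith
  have hl0 : (0:ℝ) < l := by linarith
  have hxltl : x < l := by nlinarith
  -- basic linear inequalities among a b c x y l
  have hby : (b:ℝ) ≤ y * a := by
    have h := hy ▸ le_max_right ((c:ℝ)/b) ((b:ℝ)/a)
    exact (div_le_iff₀ ha0).mp h
  have hcy : (c:ℝ) ≤ y * b := by
    have h := hy ▸ le_max_left ((c:ℝ)/b) ((b:ℝ)/a)
    exact (div_le_iff₀ hb0).mp h
  have hxca : x * a < c := (lt_div_iff₀ ha0).mp hxc
  have hlca : l * a < x * c := by
    rw [← mul_div_assoc] at hlc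
    exact (lt_div_iff₀ ha0).mp hlc
  have hcla : (c:ℝ) < l * a := by nlinarith
  -- thresholds
  obtain ⟨M₁, hM₁⟩ := exists_nat_gt ((n:ℝ) * (x - 1) / (c - x*a))
  obtain ⟨M₂, hM₂⟩ := exists_nat_gt ((n:ℝ) * (l - x) / (x*c - l*a))
  obtain ⟨M₃, hM₃⟩ := exists_nat_gt l
  set M : ℕ := max (max M₁ M₂) M₃ + 1 with hM
  apply Set.Finite.subset (Set.finite_Iio M)
  intro m hm
  simp only [Set.mem_setOf_eq] at hm
  obtain ⟨hφA, hφB, hφC⟩ := hm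
  by_contra hmM
  simp only [Set.mem_Iio, not_lt] at hmM
  have hmM₁ : (M₁:ℝ) ≤ (m:ℝ) := by exact_mod_cast Nat.le_of_lt (by omega)
  have hmM₂ : (M₂:ℝ) ≤ (m:ℝ) := by exact_mod_cast Nat.le_of_lt (by omega)
  have hmM₃ : (M₃:ℝ) ≤ (m:ℝ) := by exact_mod_cast Nat.le_of_lt (by omega)
  have hm1 : (1:ℝ) ≤ (m:ℝ) := by exact_mod_cast Nat.one_le_iff_ne_zero.mpr (by omega)
  have hm0 : (0:ℝ) ≤ (m:ℝ) := by linarith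
  -- real values of the three points
  set A' : ℝ := (n:ℝ) + a*m with hA'
  set B' : ℝ := (n:ℝ) + b*m with hB'
  set C' : ℝ := (n:ℝ) + c*m with hC'
  have castA : ((n + a*m : ℕ):ℝ) = A' := by push_cast; ring
  have castB : ((n + b*m : ℕ):ℝ) = B' := by push_cast; ring
  have castC : ((n + c*m : ℕ):ℝ) = C' := by push_cast; ring
  have hn0 : (0:ℝ) ≤ (n:ℝ) := Nat.cast_nonneg n
  -- key ratio inequalities
  have hcx0 : (0:ℝ) < (c:ℝ) - x*a := by linarith
  have key1 : x * A' < C' := by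
    have h := (div_lt_iff₀ hcx0).mp (lt_of_lt_of_le hM₁ hmM₁)
    rw [hA', hC']; linarith
  have hxc0 : (0:ℝ) < x*(c:ℝ) - l*a := by linarith
  have key2 : l * A' < x * C' := by
    have h := (div_lt_iff₀ hxc0).mp (lt_of_lt_of_le hM₂ hmM₂)
    rw [hA', hC']; linarith
  have key3 : l ≤ A' := by
    have : (m:ℝ) ≤ a * m := by linarith [mul_le_mul_of_nonneg_right ha1 hm0]
    rw [hA']; linarith
  have key4 : C' < l * A' := by
    rw [hA', hC']
    have hh1 : (l*a - (c:ℝ)) * 1 ≤ (l*a - (c:ℝ)) * m :=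
      mul_le_mul_of_nonneg_left hm1 (by linarith)
    have hh2 : (0:ℝ) ≤ (l - 1) * n := mul_nonneg (by linarith) hn0
    linarith
  have keyCB : C' ≤ y * B' := by
    rw [hB', hC']
    have hh1 : (c:ℝ) * m ≤ (y*b) * m := mul_le_mul_of_nonneg_right hcy hm0
    have hh2 : (0:ℝ) ≤ (y - 1) * n := mul_nonneg (by linarith) hn0
    linarith
  have keyBA : B' ≤ y * A' := by
    rw [hA', hB']
    have hh1 : (b:ℝ) * m ≤ (y*a) * m := mul_le_mul_of_nonneg_right hby hm0
    have hh2 : (0:ℝ) ≤ (y - 1) * n := mul_nonneg (by linarith) hn0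
    linarith
  have hAB : A' ≤ B' := by
    rw [hA', hB']
    linarith [mul_le_mul_of_nonneg_right hab'.le hm0]
  have hBC : B' ≤ C' := by
    rw [hB', hC']
    linarith [mul_le_mul_of_nonneg_right hbc'.le hm0]
  -- locator: every real ≥ l lies in exactly one interval [l^p, l^(p+1)), p ≥ 1
  have locator : ∀ z : ℝ, l ≤ z → ∃ p : ℕ, 1 ≤ p ∧ l^p ≤ z ∧ z < l^(p+1) := by
    intro z hz
    have hex : ∃ k : ℕ, z < l^(k+1) := by
      obtain ⟨k, hk⟩ := pow_unbounded_of_one_lt z hl1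
      exact ⟨k, hk.trans_le (pow_le_pow_right₀ hl1.le (Nat.le_succ k))⟩
    classical
    have hp0 : Nat.find hex ≠ 0 := by
      intro h0
      have hs := Nat.find_spec hex
      rw [h0] at hs
      simp only [zero_add, pow_one] at hs
      linarith
    obtain ⟨q, hq⟩ := Nat.exists_eq_succ_of_ne_zero hp0
    refine ⟨Nat.find hex, by omega, ?_, Nat.find_spec hex⟩
    have hmin := Nat.find_min hex (show q < Nat.find hex by omega)
    push_neg at hmin
    rw [hq]
    exact hmin
  have hlA : l ≤ ((n + a*m : ℕ):ℝ) := by rw [castA]; exact key3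
  have hlB : l ≤ ((n + b*m : ℕ):ℝ) := by rw [castB]; linarith
  have hlC : l ≤ ((n + c*m : ℕ):ℝ) := by rw [castC]; linarith
  obtain ⟨pA, hpA1, hpAle, hpAlt⟩ := locator _ hlA
  obtain ⟨pB, hpB1, hpBle, hpBlt⟩ := locator _ hlB
  obtain ⟨pC, hpC1, hpCle, hpClt⟩ := locator _ hlC
  rw [castA] at hpAle hpAlt
  rw [castB] at hpBle hpBlt
  rw [castC] at hpCle hpClt
  -- color dichotomy on each block
  have class1 : ∀ z : ℕ, ∀ p : ℕ, 1 ≤ p → l^p ≤ (z:ℝ) → (z:ℝ) < l^(p+1) →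
      φ z = 1 → (z:ℝ) < x * l^p := by
    intro z p hp hle hlt hφ
    by_contra h
    push_neg at h
    have := h2 z ⟨p, hp, h, hlt⟩
    omega
  have class2 : ∀ z : ℕ, ∀ p : ℕ, 1 ≤ p → l^p ≤ (z:ℝ) → (z:ℝ) < l^(p+1) →
      φ z = 2 → x * l^p ≤ (z:ℝ) := by
    intro z p hp hle hlt hφ
    by_contra h
    push_neg at h
    have := h1 z ⟨p, hp, hle, h⟩
    omega
  have hpApos : (0:ℝ) < l^pA := pow_pos hl0 pA
  have hpA1pos : (0:ℝ) < l^(pA+1) := pow_pos hl0 (pA+1)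
  have hpowsucc : l^(pA+1) = l * l^pA := by ring
  rcases hi with rfl | rfl
  · -- color 1
    have hA1 : A' < x * l^pA := by
      have := class1 (n + a*m) pA hpA1 (castA ▸ hpAle) (castA ▸ hpAlt) hφA
      rwa [castA] at this
    have hB1 : B' < x * l^pB := by
      have := class1 (n + b*m) pB hpB1 (castB ▸ hpBle) (castB ▸ hpBlt) hφB
      rwa [castB] at this
    have hC1 : C' < x * l^pC := by
      have := class1 (n + c*m) pC hpC1 (castC ▸ hpCle) (castC ▸ hpClt) hφC
      rwa [castC] at this
    -- pA < pC
    have h5 : x * l^pA < C' := by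
      linarith [mul_le_mul_of_nonneg_left hpAle hx0.le]
    have h6 : pA < pC := by
      have hx' : x * l^pA < x * l^pC := by linarith
      have : l^pA < l^pC := lt_of_mul_lt_mul_left hx' hx0.le
      exact (pow_lt_pow_iff_right₀ hl1).mp this
    have h7 : l^(pA+1) ≤ C' := le_trans (pow_le_pow_right₀ hl1.le h6) hpCle
    rcases le_or_gt pB pA with hcase | hcase
    · -- B in same block as A: contradiction via C ≤ yB < yx l^pA < l^(pA+1)
      have hBx : B' < x * l^pA := by
        have h' := pow_le_pow_right₀ hl1.le hcase (a := l)
        linarith [mul_le_mul_of_nonneg_left h' hx0.le]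
      linarith [mul_lt_mul_of_pos_left hBx hy0,
        mul_lt_mul_of_pos_right hxl hpApos, hpowsucc]
    · -- B in a higher block: contradiction via l^(pA+1) ≤ B ≤ yA < yx l^pA
      have hBx : l^(pA+1) ≤ B' := le_trans (pow_le_pow_right₀ hl1.le hcase) hpBle
      linarith [mul_lt_mul_of_pos_left hA1 hy0,
        mul_lt_mul_of_pos_right hxl hpApos, hpowsucc]
  · -- color 2
    have hA2 : x * l^pA ≤ A' := by
      have := class2 (n + a*m) pA hpA1 (castA ▸ hpAle) (castA ▸ hpAlt) hφA
      rwa [castA] at this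
    have hB2 : x * l^pB ≤ B' := by
      have := class2 (n + b*m) pB hpB1 (castB ▸ hpBle) (castB ▸ hpBlt) hφB
      rwa [castB] at this
    have hC2 : x * l^pC ≤ C' := by
      have := class2 (n + c*m) pC hpC1 (castC ▸ hpCle) (castC ▸ hpClt) hφC
      rwa [castC] at this
    -- pC = pA + 1
    have h5 : C' < l^(pA+2) := by
      have : l * A' < l * l^(pA+1) := mul_lt_mul_of_pos_left hpAlt hl0
      have h2' : l * l^(pA+1) = l^(pA+2) := by ring
      linarith [key4, h2' ▸ this]
    have h6 : pC ≤ pA + 1 := by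
      have hlpC : l^pC ≤ x * l^pC := le_mul_of_one_le_left (pow_pos hl0 pC).le hx1.le
      have : l^pC < l^(pA+2) := by linarith
      have := (pow_lt_pow_iff_right₀ hl1).mp this
      omega
    have h7 : l^(pA+1) < C' := by
      have hstep : x * l^(pA+1) ≤ l * A' := by
        rw [hpowsucc]
        linarith [mul_le_mul_of_nonneg_left hA2 hl0.le]
      have : x * l^(pA+1) < x * C' := by linarith
      exact lt_of_mul_lt_mul_left this hx0.le
    have h8 : pA + 1 ≤ pC := by
      have : l^(pA+1) < l^(pC+1) := by linarith
      have := (pow_lt_pow_iff_right₀ hl1).mp this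
      omega
    have hpCeq : pC = pA + 1 := by omega
    have h9 : x * l^(pA+1) ≤ C' := by rw [← hpCeq]; exact hC2
    rcases le_or_gt pB pA with hcase | hcase
    · -- B with A: C ≤ yB < y l^(pA+1) < x l^(pA+1) ≤ C
      have hBx : B' < l^(pA+1) := by
        have : l^(pB+1) ≤ l^(pA+1) := pow_le_pow_right₀ hl1.le (by omega)
        linarith
      linarith [mul_lt_mul_of_pos_left hBx hy0,
        mul_lt_mul_of_pos_right hyx hpA1pos]
    · -- B with C: x l^(pA+1) ≤ B ≤ yA < y l^(pA+1)
      have hBx : x * l^(pA+1) ≤ B' := by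
        have h' : l^(pA+1) ≤ l^pB := pow_le_pow_right₀ hl1.le hcase
        linarith [mul_le_mul_of_nonneg_left h' hx0.le]
      linarith [mul_lt_mul_of_pos_left hpAlt hy0,
        mul_lt_mul_of_pos_right hyx hpA1pos]
end
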